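/- arXiv:1311.2178 — 2 statements merged into one kernel-verified Lean document; each statement's English description precedes it below -/
import Mathlib

section
/- Let (Xₙ)ₙ∈ℕ be a sequence of nonempty compact Hausdorff topological spaces, and for each n let 𝒫ₙ be a family of subsets of Xₙ containing ∅ and Xₙ and closed under finite unions, complements, and topological closure in Xₙ. Let X = Σₙ Xₙ be the topological sum and αX = X ∪ {∞} its one-point compactification. Define 𝒬 to consist of all A ⊆ αX such that A ∩ Xₙ ∈ 𝒫ₙ for all n, and either ∞ ∉ A and {n : A ∩ Xₙ ≠ ∅} is finite, or ∞ ∈ A and {n : A ∩ Xₙ ≠ Xₙ} is finite. Then: (1) 𝒬 contains ∅ and αX and is closed under finite unions, complements in αX, and topological closure in αX; and (2) the map η(A) = A ∖ {∞} is an injection from 𝒬 into the subsets of X that preserves finite intersections, sends complements in αX to complements in X, and satisfies η(cl_{αX}(A)) = cl_X(η(A)) for all A ∈ 𝒬. -/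
open Set

lemma aux_preimage_closure {α β : Type*} [TopologicalSpace α] [TopologicalSpace β]
    {f : α → β} (hf : Topology.IsOpenEmbedding f) (A : Set β) :
    f ⁻¹' (closure A) = closure (f ⁻¹' A) := by
  apply Subset.antisymm
  · intro x hx
    have h1 : f x ∈ range f ∩ closure A := ⟨mem_range_self x, hx⟩
    have h2 := hf.isOpen_range.inter_closure h1
    rw [inter_comm, ← image_preimage_eq_inter_range] at h2
    rw [hf.isEmbedding.closure_eq_preimage_closure_image (f ⁻¹' A)]
    exact h2
  · exact hf.continuous.closure_preimage_subset A


/-- For `A ⊆ αX`, the trace `A ∩ Xₙ` of `A` on the `n`-th summand. -/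
def sec {X : ℕ → Type*} (A : Set (OnePoint (Σ n, X n))) (n : ℕ) : Set (X n) :=
  {x : X n | (OnePoint.some ⟨n, x⟩ : OnePoint (Σ n, X n)) ∈ A}

/-- The family `𝒬` of subsets of the one-point compactification `αX` of the sum `Σₙ Xₙ`:
those `A` whose trace on each `Xₙ` belongs to `𝒫ₙ` and such that either `∞ ∉ A` and `A` meets
only finitely many summands, or `∞ ∈ A` and `A` contains all but finitely many summands. -/
def Qfam {X : ℕ → Type*} (P : ∀ n, Set (Set (X n))) :
    Set (Set (OnePoint (Σ n, X n))) :=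
  {A | (∀ n, sec A n ∈ P n) ∧
    ((OnePoint.infty ∉ A ∧ {n | sec A n ≠ ∅}.Finite) ∨
     (OnePoint.infty ∈ A ∧ {n | sec A n ≠ univ}.Finite))}

/-- Let `(Xₙ)` be nonempty compact Hausdorff spaces and for each `n` let
`𝒫ₙ` be a family of subsets of `Xₙ` containing `∅` and `Xₙ` and closed under finite unions,
complements and closure.  Then (1) the family `𝒬` on the one-point compactification `αX` of
the sum `X = Σₙ Xₙ` contains `∅` and `αX` and is closed under finite unions, complements and
closure; and (2) the map `η(A) = A ∖ {∞}` is an injection from `𝒬` into the subsets of `X`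
preserving finite intersections and complements, with `η(cl(A)) = cl(η(A))` for `A ∈ 𝒬`. -/
theorem statement18 (X : ℕ → Type*) [∀ n, TopologicalSpace (X n)]
    [∀ n, CompactSpace (X n)] [∀ n, T2Space (X n)] [∀ n, Nonempty (X n)]
    (P : ∀ n, Set (Set (X n)))
    (hempty : ∀ n, (∅ : Set (X n)) ∈ P n)
    (huniv : ∀ n, (univ : Set (X n)) ∈ P n)
    (hunion : ∀ n, ∀ A ∈ P n, ∀ B ∈ P n, A ∪ B ∈ P n)
    (hcompl : ∀ n, ∀ A ∈ P n, Aᶜ ∈ P n)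
    (hclosure : ∀ n, ∀ A ∈ P n, closure A ∈ P n) :
    ((∅ : Set (OnePoint (Σ n, X n))) ∈ Qfam P ∧
     (univ : Set (OnePoint (Σ n, X n))) ∈ Qfam P ∧
     (∀ A ∈ Qfam P, ∀ B ∈ Qfam P, A ∪ B ∈ Qfam P) ∧
     (∀ A ∈ Qfam P, Aᶜ ∈ Qfam P) ∧
     (∀ A ∈ Qfam P, closure A ∈ Qfam P)) ∧
    ((∀ A ∈ Qfam P, ∀ B ∈ Qfam P,
        OnePoint.some ⁻¹' A = OnePoint.some ⁻¹' B → A = B) ∧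
     (∀ A B : Set (OnePoint (Σ n, X n)),
        OnePoint.some ⁻¹' (A ∩ B) =
          (OnePoint.some ⁻¹' A : Set (Σ n, X n)) ∩ OnePoint.some ⁻¹' B) ∧
     (∀ A : Set (OnePoint (Σ n, X n)),
        OnePoint.some ⁻¹' Aᶜ = (OnePoint.some ⁻¹' A : Set (Σ n, X n))ᶜ) ∧
     (∀ A ∈ Qfam P,
        OnePoint.some ⁻¹' (closure A) =
          closure (OnePoint.some ⁻¹' A : Set (Σ n, X n)))) := by
  have hcoe : Topology.IsOpenEmbedding (OnePoint.some : (Σ n, X n) → OnePoint (Σ n, X n)) :=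
    OnePoint.isOpenEmbedding_coe
  have hι : ∀ n : ℕ, Topology.IsOpenEmbedding
      (fun x : X n => (OnePoint.some ⟨n, x⟩ : OnePoint (Σ n, X n))) := fun n =>
    hcoe.comp Topology.IsOpenEmbedding.sigmaMk
  have hsec : ∀ (A : Set (OnePoint (Σ n, X n))) (n : ℕ),
      sec (closure A) n = closure (sec A n) := fun A n => aux_preimage_closure (hι n) A
  refine ⟨⟨?_, ?_, ?_, ?_, ?_⟩, ?_, fun A B => preimage_inter, fun A => preimage_compl,
    fun A _ => aux_preimage_closure hcoe A⟩
  · exact ⟨fun n => hempty n, Or.inl ⟨notMem_empty _, by simp [sec]⟩⟩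
  · exact ⟨fun n => huniv n, Or.inr ⟨mem_univ _, by simp [sec]⟩⟩
  · rintro A ⟨hAP, hA⟩ B ⟨hBP, hB⟩
    refine ⟨fun n => hunion n _ (hAP n) _ (hBP n), ?_⟩
    rcases hA with ⟨hAi, hAf⟩ | ⟨hAi, hAf⟩
    · rcases hB with ⟨hBi, hBf⟩ | ⟨hBi, hBf⟩
      · refine Or.inl ⟨fun h => h.elim hAi hBi, (hAf.union hBf).subset ?_⟩
        intro n hn
        by_contra hc
        simp only [mem_union, mem_setOf_eq, not_or, not_not] at hc
        exact hn (show sec A n ∪ sec B n = ∅ by rw [hc.1, hc.2, union_empty])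
      · refine Or.inr ⟨Or.inr hBi, hBf.subset fun n hn hc => ?_⟩
        exact hn (eq_univ_of_univ_subset (hc ▸ subset_union_right))
    · refine Or.inr ⟨Or.inl hAi, hAf.subset fun n hn hc => ?_⟩
      exact hn (eq_univ_of_univ_subset (hc ▸ subset_union_left))
  · rintro A ⟨hAP, hA⟩
    refine ⟨fun n => hcompl n _ (hAP n), ?_⟩
    rcases hA with ⟨hAi, hAf⟩ | ⟨hAi, hAf⟩
    · exact Or.inr ⟨hAi, hAf.subset fun n hn hc =>
        hn (by show (sec A n)ᶜ = univ; rw [hc, compl_empty])⟩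
    · exact Or.inl ⟨fun h => h hAi, hAf.subset fun n hn hc =>
        hn (by show (sec A n)ᶜ = ∅; rw [hc, compl_univ])⟩
  · rintro A ⟨hAP, hA⟩
    refine ⟨fun n => (hsec A n) ▸ hclosure n _ (hAP n), ?_⟩
    rcases hA with ⟨hAi, hAf⟩ | ⟨hAi, hAf⟩
    · refine Or.inl ⟨?_, hAf.subset fun n hn hc => hn (by rw [hsec A n, hc, closure_empty])⟩
      set K : Set (Σ n, X n) := ⋃ n ∈ {n | sec A n ≠ ∅}, range (Sigma.mk n) with hKdef
      have hKc : IsCompact K :=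
        hAf.isCompact_biUnion fun n _ => isCompact_range continuous_sigmaMk
      have hKcl : IsClosed K :=
        hAf.isClosed_biUnion fun n _ =>
          Topology.IsClosedEmbedding.sigmaMk.isClosed_range
      have hcl : IsClosed (((↑) : (Σ n, X n) → OnePoint (Σ n, X n)) '' K) :=
        OnePoint.isClosed_image_coe.2 ⟨hKcl, hKc⟩
      have hsub : A ⊆ ((↑) : (Σ n, X n) → OnePoint (Σ n, X n)) '' K := by
        intro a ha
        match a with
        | OnePoint.infty => exact absurd ha hAi
        | OnePoint.some ⟨n, x⟩ =>
          refine ⟨⟨n, x⟩, mem_biUnion ?_ (mem_range_self x), rfl⟩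
          exact fun h => (h ▸ (notMem_empty x)) (show x ∈ sec A n from ha)
      intro hmem
      exact OnePoint.infty_notMem_image_coe (closure_minimal hsub hcl hmem)
    · exact Or.inr ⟨subset_closure hAi,
        hAf.subset fun n hn hc => hn (by rw [hsec A n, hc, closure_univ])⟩
  · -- injectivity
    have key : ∀ A ∈ Qfam P, ∀ B ∈ Qfam P,
        OnePoint.some ⁻¹' A = OnePoint.some ⁻¹' B → OnePoint.infty ∈ A →
        OnePoint.infty ∈ B := by
      rintro A ⟨-, hA⟩ B ⟨-, hB⟩ h hAi
      by_contra hBi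
      rcases hA with ⟨h', -⟩ | ⟨-, hAf⟩; · exact h' hAi
      rcases hB with ⟨-, hBf⟩ | ⟨h', -⟩; swap; · exact hBi h'
      obtain ⟨n, hn⟩ := ((hAf.union hBf).infinite_compl).nonempty
      simp only [compl_union, mem_inter_iff, mem_compl_iff, mem_setOf_eq, not_not] at hn
      obtain ⟨x⟩ : Nonempty (X n) := inferInstance
      have hx : x ∈ sec A n := hn.1 ▸ mem_univ x
      have hx' : x ∈ sec B n := by
        have : (⟨n, x⟩ : Σ n, X n) ∈ OnePoint.some ⁻¹' A := hx
        rw [h] at this; exact this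
      rw [hn.2] at hx'
      exact hx'
    intro A hA B hB h
    ext a
    match a with
    | OnePoint.infty => exact ⟨key A hA B hB h, key B hB A hA h.symm⟩
    | OnePoint.some y =>
      constructor
      · intro ha; have : y ∈ OnePoint.some ⁻¹' A := ha; rw [h] at this; exact this
      · intro ha; have : y ∈ OnePoint.some ⁻¹' B := ha; rw [← h] at this; exact this
end

section
/- Let (W, R) be a countable rooted S4-frame that has a maximal cluster, i.e., there exists an R-maximal point w₀ (a point with w₀ R v implying v R w₀). Then there exist a topological space X, a surjective interior map ρ : 𝐋₂ → X, and an injective map h from the powerset of W to the powerset of X such that h preserves finite unions and complements and satisfies h(R⁻¹(A)) = closure(h(A)) for every A ⊆ W, where R⁻¹(A) = {w : ∃ v ∈ A, w R v}. -/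
open Set

/-- Finite and infinite `σ`-valued sequences, encoded as functions `ℕ → Option σ` whose
domain of definition is an initial segment of `ℕ`. -/
structure Lgen (σ : Type*) where
  toFun : ℕ → Option σ
  init : ∀ n, toFun (n + 1) ≠ none → toFun n ≠ none

/-- The initial-segment (prefix) partial order on `Lgen σ`. -/
instance Lgen.instPartialOrder {σ : Type*} : PartialOrder (Lgen σ) where
  le f g := ∀ (n : ℕ) (s : σ), f.toFun n = some s → g.toFun n = some s
  le_refl f n s h := h
  le_trans f g h hfg hgh n s hs := hgh n s (hfg n s hs)
  le_antisymm f g hfg hgf := by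
    obtain ⟨ff, hf⟩ := f
    obtain ⟨gf, hg⟩ := g
    have hfun : ff = gf := by
      funext n
      cases hfn : ff n with
      | some s =>
        have h2 : gf n = some s := hfg n s hfn
        exact h2.symm
      | none =>
        cases hgn : gf n with
        | some s =>
          have h2 : ff n = some s := hgf n s hgn
          rw [hfn] at h2
          exact absurd h2 (by simp)
        | none => rfl
    subst hfun
    rfl

/-- The finite sequence given by a list, as an element of `Lgen σ`. -/
def Lgen.ofList {σ : Type*} (l : List σ) : Lgen σ where
  toFun n := l[n]?
  init n h := by
    simp only [ne_eq, List.getElem?_eq_none_iff, not_le] at h ⊢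
    omega

/-- The infinite binary tree with limits `L₂`: finite and infinite binary sequences with the
initial-segment order. -/
abbrev L2 : Type := Lgen Bool

/-- The Scott topology of a preorder: opens are the upper sets `U` such that every nonempty
directed set whose least upper bound lies in `U` meets `U`. -/
def scottTopology (α : Type*) [Preorder α] : TopologicalSpace α where
  IsOpen U := IsUpperSet U ∧ ∀ d : Set α, d.Nonempty → DirectedOn (· ≤ ·) d →
      ∀ x, IsLUB d x → x ∈ U → (d ∩ U).Nonempty
  isOpen_univ := ⟨isUpperSet_univ, fun d hd _ _ _ _ => hd.imp fun y hy => ⟨hy, mem_univ y⟩⟩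
  isOpen_inter := by
    rintro U V ⟨hU1, hU2⟩ ⟨hV1, hV2⟩
    refine ⟨hU1.inter hV1, fun d hdne hdir x hlub hx => ?_⟩
    obtain ⟨a, ha, haU⟩ := hU2 d hdne hdir x hlub hx.1
    obtain ⟨b, hb, hbV⟩ := hV2 d hdne hdir x hlub hx.2
    obtain ⟨c, hc, hac, hbc⟩ := hdir a ha b hb
    exact ⟨c, hc, hU1 hac haU, hV1 hbc hbV⟩
  isOpen_sUnion := by
    intro S hS
    refine ⟨fun a b hab ha => ?_, fun d hdne hdir x hlub hx => ?_⟩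
    · obtain ⟨U, hU, haU⟩ := ha
      exact ⟨U, hU, (hS U hU).1 hab haU⟩
    · obtain ⟨U, hU, hxU⟩ := hx
      obtain ⟨a, ha, haU⟩ := (hS U hU).2 d hdne hdir x hlub hxU
      exact ⟨a, ha, U, hU, haU⟩

/-- `𝐋₂`: the infinite binary tree with limits carries the Scott topology. -/
instance : TopologicalSpace L2 := scottTopology L2

/-!
Take `X = 𝐋₂` and `ρ = id`; the content is an embedding of the closure algebra of `(W, R)` into
that of `𝐋₂`. Enumerate `W` by `E : ℕ → W` so that every point occurs infinitely often, and label
finite binary sequences by an automaton with state `(w, k)`: reading `false` increments the counter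
`k`, reading `true` moves to `E k` if `w R E k` and resets `k`. Labels increase along extensions,
and every `R`-successor of the label of `l` is the label of an extension of `l`. Each `x : 𝐋₂` gets
an ultrafilter `U x` refining the tail of the labels of its finite prefixes, and
`h A = {x | A ∈ U x}` is a Boolean embedding. As cones above finite sequences are Scott open and
`x` is the supremum of its finite prefixes, `x ∈ closure (h A)` iff each finite prefix of `x` lies
below a point of `h A`; by the two properties of the labeling this says `R⁻¹ A ∈ U x`.
-/

namespace Lgen

variable {σ : Type*}

theorem toFun_eq_none_of_le (x : Lgen σ) {m n : ℕ} (hmn : m ≤ n) (h : x.toFun m = none) :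
    x.toFun n = none := by
  induction n, hmn using Nat.le_induction with
  | base => exact h
  | succ n _ ih => exact not_not.mp fun hn => x.init n hn ih

def take (x : Lgen σ) (n : ℕ) : List σ := (List.range n).filterMap x.toFun

theorem getElem?_take (x : Lgen σ) (n i : ℕ) :
    (x.take n)[i]? = if i < n then x.toFun i else none := by
  induction n generalizing i with
  | zero => simp [take]
  | succ n ih =>
    have hsucc : x.take (n + 1) = x.take n ++ (x.toFun n).toList := by
      simp only [take, List.range_succ, List.filterMap_append, List.filterMap_cons,
        List.filterMap_nil]
      cases x.toFun n <;> rfl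
    rcases hxn : x.toFun n with _ | s
    · rw [hsucc, hxn, Option.toList_none, List.append_nil, ih]
      grind
    · have hlen : (x.take n).length = n := by
        refine le_antisymm (by simpa using ih n) (not_lt.mp fun hlt => ?_)
        have h := ih (x.take n).length
        rw [List.getElem?_eq_none le_rfl, if_pos hlt] at h
        simp [x.toFun_eq_none_of_le hlt.le h.symm] at hxn
      rw [hsucc, hxn, Option.toList_some]
      grind

theorem ofList_take_le (x : Lgen σ) (n : ℕ) : ofList (x.take n) ≤ x := by
  intro i s h
  change (x.take n)[i]? = some s at h
  rw [getElem?_take] at h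
  split_ifs at h
  exact h

theorem take_ofList (l : List σ) (n : ℕ) : (ofList l).take n = l.take n := by
  ext i : 1
  rw [getElem?_take, List.getElem?_take]
  rfl

theorem take_length_of_ofList_le {l : List σ} {x : Lgen σ} (h : ofList l ≤ x) :
    x.take l.length = l := by
  ext i : 1
  rw [getElem?_take]
  split_ifs with hi
  · exact (h i _ (List.getElem?_eq_getElem hi)).trans (List.getElem?_eq_getElem hi).symm
  · exact (List.getElem?_eq_none (not_lt.mp hi)).symm

theorem ofList_le_ofList_iff {l l' : List σ} : ofList l ≤ ofList l' ↔ l <+: l' := by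
  refine ⟨fun h => ?_, fun ⟨t, ht⟩ i s hs => ?_⟩
  · rw [List.prefix_iff_eq_take, ← take_ofList]
    exact (take_length_of_ofList_le h).symm
  · change l[i]? = some s at hs
    change l'[i]? = some s
    rw [← ht, List.getElem?_append_left (List.getElem?_eq_some_iff.mp hs).1, hs]

theorem monotone_ofList_take (x : Lgen σ) : Monotone fun n => ofList (x.take n) := by
  intro m n hmn i s hs
  change (x.take m)[i]? = some s at hs
  change (x.take n)[i]? = some s
  rw [getElem?_take] at hs ⊢
  split_ifs at hs with hi
  rw [if_pos (hi.trans_le hmn), hs]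

theorem take_prefix_take (x : Lgen σ) {m n : ℕ} (hmn : m ≤ n) : x.take m <+: x.take n :=
  ofList_le_ofList_iff.mp (x.monotone_ofList_take hmn)

theorem isLUB_range_ofList_take (x : Lgen σ) : IsLUB (Set.range fun n => ofList (x.take n)) x := by
  refine ⟨Set.forall_mem_range.mpr x.ofList_take_le, fun z hz i s hs => ?_⟩
  refine hz ⟨i + 1, rfl⟩ i s ?_
  change (x.take (i + 1))[i]? = some s
  rw [getElem?_take, if_pos i.lt_succ_self, hs]

theorem ofList_nil_le (x : Lgen σ) : ofList [] ≤ x := fun _ _ h => by simp [ofList] at h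

theorem exists_toFun_ne_none_of_isLUB {d : Set (Lgen σ)} {x : Lgen σ} (hd : IsLUB d x) {n : ℕ}
    (hn : x.toFun n ≠ none) : ∃ w ∈ d, w.toFun n ≠ none := by
  by_contra! hd_none
  have hbound : ofList (x.take n) ∈ upperBounds d := by
    intro w hw i s hs
    have hi : i < n := not_le.mp fun hni => by simp [w.toFun_eq_none_of_le hni (hd_none w hw)] at hs
    change (x.take n)[i]? = some s
    rw [getElem?_take, if_pos hi]
    exact hd.1 hw i s hs
  obtain ⟨s, hs⟩ := Option.ne_none_iff_exists'.mp hn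
  have := hd.2 hbound n s hs
  simp [ofList, getElem?_take] at this

open Topology

theorem isOpen_Ici_ofList (l : List σ) :
    IsOpen[scottTopology (Lgen σ)] (Set.Ici (ofList l)) := by
  refine ⟨isUpperSet_Ici _, fun d hne _ x hlub hlx => ?_⟩
  rcases l.eq_nil_or_concat with rfl | ⟨l, a, rfl⟩
  · exact hne.mono fun w hw => ⟨hw, ofList_nil_le w⟩
  rw [List.concat_eq_append] at hlx ⊢
  obtain ⟨w, hwd, hw⟩ := exists_toFun_ne_none_of_isLUB hlub (n := l.length)
    (by simp [hlx l.length a (by simp [ofList])])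
  refine ⟨w, hwd, fun i s hs => ?_⟩
  have hi : i ≤ l.length := by
    simpa [Nat.lt_succ_iff] using (List.getElem?_eq_some_iff.mp hs).1
  obtain ⟨t, ht⟩ := Option.ne_none_iff_exists'.mp fun h => hw (w.toFun_eq_none_of_le hi h)
  rw [ht, ← hlub.1 hwd i t ht, hlx i s hs]

theorem mem_closure_iff_forall_take {S : Set (Lgen σ)} {x : Lgen σ} :
    x ∈ closure[scottTopology (Lgen σ)] S ↔ ∀ n, ∃ y ∈ S, ofList (x.take n) ≤ y := by
  let _ := scottTopology (Lgen σ)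
  rw [mem_closure_iff]
  constructor
  · intro h n
    obtain ⟨y, hy, hyS⟩ := h _ (isOpen_Ici_ofList _) (x.ofList_take_le n)
    exact ⟨y, hyS, hy⟩
  · rintro h U ⟨hU, hU_scott⟩ hxU
    obtain ⟨_, ⟨n, rfl⟩, hnU⟩ := hU_scott _ (Set.range_nonempty _)
      (directedOn_range.mpr x.monotone_ofList_take.directed_le) x x.isLUB_range_ofList_take hxU
    obtain ⟨y, hyS, hy⟩ := h n
    exact ⟨y, hU hy hnU, hyS⟩

end Lgen

open Filter

namespace Labeling

variable {W : Type*} [Preorder W] (E : ℕ → W)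

open Classical in
noncomputable def step (s : W × ℕ) : Bool → W × ℕ
  | false => (s.1, s.2 + 1)
  | true => (if s.1 ≤ E s.2 then E s.2 else s.1, 0)

theorem le_step (s : W × ℕ) (b : Bool) : s.1 ≤ (step E s b).1 := by
  cases b
  · exact le_rfl
  · dsimp only [step]
    split_ifs with h
    exacts [h, le_rfl]

theorem le_foldl_step (l : List Bool) (s : W × ℕ) : s.1 ≤ (l.foldl (step E) s).1 := by
  induction l generalizing s with
  | nil => exact le_rfl
  | cons b l ih => exact (le_step E s b).trans (ih _)

theorem foldl_step_replicate_false (m : ℕ) (w : W) (k : ℕ) :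
    (List.replicate m false).foldl (step E) (w, k) = (w, k + m) := by
  induction m generalizing k with
  | zero => rfl
  | succ m ih => rw [List.replicate_succ, List.foldl_cons, step, ih, Nat.add_right_comm]; rfl

noncomputable def label (r : W) (l : List Bool) : W := (l.foldl (step E) (r, 0)).1

variable {E} {r : W}

theorem exists_foldl_step_eq (hE : ∀ u, ∃ᶠ k in atTop, E k = u) {s : W × ℕ} {u : W}
    (hsu : s.1 ≤ u) : ∃ δ : List Bool, (δ.foldl (step E) s).1 = u := by
  obtain ⟨k, hk, hEk⟩ := frequently_atTop.mp (hE u) s.2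
  refine ⟨List.replicate (k - s.2) false ++ [true], ?_⟩
  rw [List.foldl_append, foldl_step_replicate_false, Nat.add_sub_cancel' hk]
  simp [step, hEk, hsu]

theorem label_le_label_of_prefix {l l' : List Bool} (h : l <+: l') :
    label E r l ≤ label E r l' := by
  obtain ⟨t, rfl⟩ := h
  rw [label, label, List.foldl_append]
  exact le_foldl_step E t _

theorem exists_label_append_eq (hE : ∀ u, ∃ᶠ k in atTop, E k = u) {u : W} {l : List Bool}
    (h : label E r l ≤ u) : ∃ δ, label E r (l ++ δ) = u := by
  simpa only [label, List.foldl_append] using exists_foldl_step_eq hE h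

variable (E r) in
noncomputable def limitUltrafilter (x : L2) : Ultrafilter W :=
  Ultrafilter.of (map (fun n => label E r (x.take n)) atTop)

variable (E r) in
noncomputable def embed (A : Set W) : Set L2 := {x | A ∈ limitUltrafilter E r x}

theorem mem_limitUltrafilter_of_eventually {x : L2} {S : Set W}
    (h : ∀ᶠ n in atTop, label E r (x.take n) ∈ S) : S ∈ limitUltrafilter E r x :=
  Ultrafilter.of_le _ h

theorem Ici_label_take_mem_limitUltrafilter (x : L2) (n : ℕ) :
    Set.Ici (label E r (x.take n)) ∈ limitUltrafilter E r x :=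
  mem_limitUltrafilter_of_eventually <| eventually_atTop.mpr
    ⟨n, fun _ hm => label_le_label_of_prefix (x.take_prefix_take hm)⟩

theorem _root_.IsLowerSet.mem_limitUltrafilter_iff {S : Set W} (hS : IsLowerSet S) {x : L2} :
    S ∈ limitUltrafilter E r x ↔ ∀ n, label E r (x.take n) ∈ S := by
  refine ⟨fun h n => ?_, fun h => mem_limitUltrafilter_of_eventually (.of_forall h)⟩
  obtain ⟨u, huS, hu⟩ :=
    Ultrafilter.nonempty_of_mem (inter_mem h (Ici_label_take_mem_limitUltrafilter x n))
  exact hS hu huS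

theorem mem_embed_ofList {A : Set W} {l : List Bool} :
    Lgen.ofList l ∈ embed E r A ↔ label E r l ∈ A := by
  have hlabel : ∀ S : Set W, label E r l ∈ S → S ∈ limitUltrafilter E r (Lgen.ofList l) :=
    fun S hS => mem_limitUltrafilter_of_eventually <| eventually_atTop.mpr
      ⟨l.length, fun n hn => by rwa [Lgen.take_ofList, List.take_of_length_le hn]⟩
  refine ⟨fun hA => by_contra fun hlA => ?_, hlabel A⟩
  exact Ultrafilter.compl_mem_iff_notMem.mp (hlabel Aᶜ hlA) hA

theorem label_mem_lowerClosure_iff (hE : ∀ u, ∃ᶠ k in atTop, E k = u) {A : Set W}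
    {l : List Bool} :
    label E r l ∈ lowerClosure A ↔ ∃ y ∈ embed E r A, Lgen.ofList l ≤ y := by
  constructor
  · rintro ⟨a, haA, hla⟩
    obtain ⟨δ, hδ⟩ := exists_label_append_eq hE hla
    exact ⟨Lgen.ofList (l ++ δ), mem_embed_ofList.mpr (hδ ▸ haA),
      Lgen.ofList_le_ofList_iff.mpr (List.prefix_append l δ)⟩
  · rintro ⟨y, hyA, hly⟩
    have hIci := Ici_label_take_mem_limitUltrafilter (E := E) (r := r) y l.length
    rw [Lgen.take_length_of_ofList_le hly] at hIci
    obtain ⟨a, haA, hla⟩ := Ultrafilter.nonempty_of_mem (inter_mem hyA hIci)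
    exact ⟨a, haA, hla⟩

theorem embed_lowerClosure (hE : ∀ u, ∃ᶠ k in atTop, E k = u) (A : Set W) :
    embed E r (lowerClosure A) = closure (embed E r A) := by
  ext x
  rw [Lgen.mem_closure_iff_forall_take]
  simp only [← label_mem_lowerClosure_iff hE]
  exact (lowerClosure A).lower.mem_limitUltrafilter_iff

theorem embed_injective (hE : ∀ u, ∃ᶠ k in atTop, E k = u) (hr : IsBot r) :
    Function.Injective (embed E r) := by
  intro A B hAB
  ext u
  obtain ⟨l, rfl⟩ := exists_label_append_eq (l := []) hE (hr u)
  rw [← mem_embed_ofList, ← mem_embed_ofList, hAB]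

end Labeling

theorem exists_forall_frequently_eq (W : Type*) [Countable W] [Nonempty W] :
    ∃ E : ℕ → W, ∀ u, ∃ᶠ k in atTop, E k = u := by
  obtain ⟨e, he⟩ := exists_surjective_nat W
  refine ⟨fun k => e k.unpair.1, fun u => frequently_atTop.mpr fun k₀ => ?_⟩
  obtain ⟨i, rfl⟩ := he u
  exact ⟨Nat.pair i k₀, Nat.right_le_pair i k₀, by simp⟩

open Labeling in
theorem statement19_general {W : Type*} [Countable W] (R : W → W → Prop)
    (hrefl : ∀ w, R w w) (htrans : ∀ u v w, R u v → R v w → R u w)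
    (hroot : ∃ w, ∀ v, R w v) :
    ∃ (X : Type) (_ : TopologicalSpace X) (ρ : L2 → X),
      Function.Surjective ρ ∧ Continuous ρ ∧ IsOpenMap ρ ∧
      ∃ h : Set W → Set X, Function.Injective h ∧
        (∀ A B : Set W, h (A ∪ B) = h A ∪ h B) ∧
        (∀ A : Set W, h Aᶜ = (h A)ᶜ) ∧
        (∀ A : Set W, h {w : W | ∃ v ∈ A, R w v} = closure (h A)) := by
  let _ : Preorder W := { le := R, le_refl := hrefl, le_trans := htrans }
  obtain ⟨r, hr⟩ := hroot
  have : Nonempty W := ⟨r⟩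
  obtain ⟨E, hE⟩ := exists_forall_frequently_eq W
  exact ⟨L2, inferInstance, id, Function.surjective_id, continuous_id, IsOpenMap.id, embed E r,
    embed_injective hE hr, fun A B => Set.ext fun _ => Ultrafilter.union_mem_iff,
    fun A => Set.ext fun _ => Ultrafilter.compl_mem_iff_notMem, embed_lowerClosure hE⟩

/-- Let `(W, R)` be a countable rooted S4-frame having an `R`-maximal point.
Then there are a topological space `X`, a surjective interior map `ρ : 𝐋₂ → X`, and an
injective map `h` from the powerset of `W` to the powerset of `X` preserving finite unions and
complements and satisfying `h (R⁻¹ A) = closure (h A)` for every `A ⊆ W`. -/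
theorem statement19 {W : Type*} [Countable W] (R : W → W → Prop)
    (hrefl : ∀ w, R w w) (htrans : ∀ u v w, R u v → R v w → R u w)
    (hroot : ∃ w, ∀ v, R w v)
    (hmax : ∃ w₀ : W, ∀ v, R w₀ v → R v w₀) :
    ∃ (X : Type) (_ : TopologicalSpace X) (ρ : L2 → X),
      Function.Surjective ρ ∧ Continuous ρ ∧ IsOpenMap ρ ∧
      ∃ h : Set W → Set X, Function.Injective h ∧
        (∀ A B : Set W, h (A ∪ B) = h A ∪ h B) ∧
        (∀ A : Set W, h Aᶜ = (h A)ᶜ) ∧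
        (∀ A : Set W, h {w : W | ∃ v ∈ A, R w v} = closure (h A)) :=
  statement19_general R hrefl htrans hroot
end
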